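/- arXiv:2003.01798 — 7 statements merged into one kernel-verified Lean document; each statement's English description precedes it below -/
import Mathlib

section
/- If G is a finite abelian group admitting a complete mapping (a bijection φ: G → G such that x ↦ x·φ(x) is also a bijection), then the product of all elements of G is the identity. -/
/-- If a finite abelian group admits a complete mapping, the product of all its
elements is the identity. -/
theorem stmt_0 {G : Type*} [CommGroup G] [Fintype G] (φ : G ≃ G)
    (h : Function.Bijective fun x : G => x * φ x) :
    ∏ x : G, x = 1 := by
  have hprod : ∏ x : G, x * φ x = ∏ x : G, x := (Equiv.ofBijective _ h).prod_comp id
  rw [Finset.prod_mul_distrib, φ.prod_comp fun x => x] at hprod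
  exact mul_eq_left.mp hprod
end

section
/- If G is a finite group admitting a complete mapping, then the product of all elements of G (in any order) lies in the commutator subgroup G' = [G,G]. -/
/-- If a finite group admits a complete mapping, then the product of all its
elements, taken in any order, lies in the commutator subgroup. -/
theorem stmt_1 {G : Type*} [Group G] [Fintype G] (φ : G ≃ G)
    (h : Function.Bijective fun x : G => x * φ x)
    (l : List G) (hl : l.Nodup) (hmem : ∀ x : G, x ∈ l) :
    l.prod ∈ commutator G := by
  classical
  rw [← QuotientGroup.eq_one_iff]
  have hπ : (Abelianization.of : G →* Abelianization G) l.prod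
      = Finset.univ.prod (fun x : G => Abelianization.of x) := by
    rw [map_list_prod]
    have huniv : l.toFinset = Finset.univ :=
      Finset.eq_univ_iff_forall.2 fun x => List.mem_toFinset.2 (hmem x)
    rw [← List.prod_toFinset _ hl, huniv]
  set P : Abelianization G := Finset.univ.prod (fun x : G => Abelianization.of x) with hP
  have key : P * P = P := by
    have e : Finset.univ.prod (fun x : G => Abelianization.of (x * φ x)) = P := by
      exact Fintype.prod_bijective _ h _ _ (fun x => rfl)
    calc P * P
        = Finset.univ.prod (fun x : G => Abelianization.of x)
          * Finset.univ.prod (fun x : G => Abelianization.of (φ x)) := by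
            rw [← hP, Fintype.prod_equiv φ _ (fun x => Abelianization.of x) (fun x => rfl)]
      _ = Finset.univ.prod (fun x : G => Abelianization.of x * Abelianization.of (φ x)) := by
            rw [Finset.prod_mul_distrib]
      _ = Finset.univ.prod (fun x : G => Abelianization.of (x * φ x)) := by
            simp [map_mul]
      _ = P := e
  have hP1 : P = 1 := by
    have := mul_right_cancel (b := P) (a := P) (c := 1) (by simpa using key)
    simpa using this
  exact hπ.trans hP1
end

section
/- Let G be a finite group of order n, let 𝒫₁, 𝒫₂, 𝒫₃ be partitions of {1,…,n}, and let f: {1,…,n} → G. Then the number of triples (h₁,h₂,h₃) of functions {1,…,n} → G with each hᵢ constant on cells of 𝒫ᵢ and h₁(x)h₂(x)h₃(x) = f(x) for all x is at most n^{|𝒫₁| + |𝒫₂ ∨ 𝒫₃|}, where |𝒫| denotes the number of cells and ∨ the join in the partition lattice. -/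
/-- The number of triples `(h₁,h₂,h₃)` of functions `{1,…,n} → G`, with `hᵢ`
constant on the cells of the partition `𝒫ᵢ` and `h₁ h₂ h₃ = f` pointwise, is at
most `n^{|𝒫₁| + |𝒫₂ ⊔ 𝒫₃|}`. -/
theorem stmt_9 {G : Type*} [Group G] [Fintype G] (n : ℕ)
    (hn : Fintype.card G = n) (P₁ P₂ P₃ : Setoid (Fin n)) (f : Fin n → G) :
    Nat.card {h : (Fin n → G) × (Fin n → G) × (Fin n → G) //
        (∀ x y, P₁.r x y → h.1 x = h.1 y) ∧
        (∀ x y, P₂.r x y → h.2.1 x = h.2.1 y) ∧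
        (∀ x y, P₃.r x y → h.2.2 x = h.2.2 y) ∧
        ∀ x, h.1 x * h.2.1 x * h.2.2 x = f x}
      ≤ n ^ (Nat.card (Quotient P₁) + Nat.card (Quotient (P₂ ⊔ P₃))) := by
  classical
  set T := {h : (Fin n → G) × (Fin n → G) × (Fin n → G) //
        (∀ x y, P₁.r x y → h.1 x = h.1 y) ∧
        (∀ x y, P₂.r x y → h.2.1 x = h.2.1 y) ∧
        (∀ x y, P₃.r x y → h.2.2 x = h.2.2 y) ∧
        ∀ x, h.1 x * h.2.1 x * h.2.2 x = f x} with hT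
  let Φ : T → (Quotient P₁ → G) × (Quotient (P₂ ⊔ P₃) → G) :=
    fun h => (fun q => h.1.1 q.out, fun q => h.1.2.1 q.out)
  have hinj : Function.Injective Φ := by
    rintro ⟨⟨a₁, a₂, a₃⟩, ha₁, ha₂, ha₃, haf⟩ ⟨⟨b₁, b₂, b₃⟩, hb₁, hb₂, hb₃, hbf⟩ hab
    simp only [Φ, Prod.mk.injEq] at hab
    obtain ⟨hab1, hab2⟩ := hab
    dsimp only at ha₁ ha₂ ha₃ haf hb₁ hb₂ hb₃ hbf
    -- a₁ = b₁
    have e1 : a₁ = b₁ := by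
      funext x
      have hx : P₁.r ((Quotient.mk P₁ x).out) x :=
        Quotient.exact ((Quotient.mk P₁ x).out_eq)
      rw [← ha₁ _ _ hx, ← hb₁ _ _ hx]
      exact congrFun hab1 (Quotient.mk P₁ x)
    -- key transfer along the join relation
    have key : ∀ x y, (P₂ ⊔ P₃).r x y → (a₂ x = b₂ x ↔ a₂ y = b₂ y) := by
      have hs : (P₂ ⊔ P₃) = Relation.EqvGen.setoid fun x y => P₂ x y ∨ P₃ x y :=
        Setoid.sup_eq_eqvGen P₂ P₃
      intro x y hxy
      rw [hs] at hxy
      have hxy' : Relation.EqvGen (fun x y => P₂ x y ∨ P₃ x y) x y := hxy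
      clear hxy
      induction hxy' with
      | rel x y h =>
        rcases h with h | h
        · rw [ha₂ _ _ h, hb₂ _ _ h]
        · have ea : a₂ x = (a₁ x)⁻¹ * f x * (f y)⁻¹ * a₁ y * a₂ y := by
            have h2 : a₂ x = (a₁ x)⁻¹ * f x * (a₃ x)⁻¹ := by
              rw [← haf x]; group
            have h3 : a₃ y = (a₂ y)⁻¹ * ((a₁ y)⁻¹ * f y) := by
              rw [← haf y]; group
            rw [h2, ha₃ _ _ h, h3]; group
          have eb : b₂ x = (b₁ x)⁻¹ * f x * (f y)⁻¹ * b₁ y * b₂ y := by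
            have h2 : b₂ x = (b₁ x)⁻¹ * f x * (b₃ x)⁻¹ := by
              rw [← hbf x]; group
            have h3 : b₃ y = (b₂ y)⁻¹ * ((b₁ y)⁻¹ * f y) := by
              rw [← hbf y]; group
            rw [h2, hb₃ _ _ h, h3]; group
          rw [ea, eb, ← e1]
          constructor
          · intro hh; exact mul_left_cancel hh
          · intro hh; rw [hh]
      | refl x => rfl
      | symm x y _ ih => exact ih.symm
      | trans x y z _ _ ih1 ih2 => exact ih1.trans ih2
    have e2 : a₂ = b₂ := by
      funext x
      have hx : (P₂ ⊔ P₃).r x ((Quotient.mk (P₂ ⊔ P₃) x).out) :=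
        (P₂ ⊔ P₃).symm' (Quotient.exact ((Quotient.mk (P₂ ⊔ P₃) x).out_eq))
      exact (key _ _ hx).2 (congrFun hab2 (Quotient.mk (P₂ ⊔ P₃) x))
    have e3 : a₃ = b₃ := by
      funext x
      have ha := haf x
      have hb := hbf x
      rw [e1, e2] at ha
      rw [← hb] at ha
      exact mul_left_cancel ha
    simp [e1, e2, e3]
  calc Nat.card T ≤ Nat.card ((Quotient P₁ → G) × (Quotient (P₂ ⊔ P₃) → G)) :=
        Nat.card_le_card_of_injective Φ hinj
    _ = n ^ (Nat.card (Quotient P₁) + Nat.card (Quotient (P₂ ⊔ P₃))) := by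
        rw [Nat.card_prod, Nat.card_fun, Nat.card_fun, Nat.card_eq_fintype_card, hn, pow_add]
end

section
/- Let V be a finite-dimensional complex inner product space with orthonormal basis e₁,…,e_n, and let v₁,…,v_k ∈ V be pairwise orthogonal vectors. For a function r: {1,…,n} → {1,…,k} and a = (a₁,…,a_k), write r ∼ a if |r⁻¹(i)| = aᵢ for each i. Then ∑_{a₁+⋯+a_k = n} |∑_{r ∼ a} ⟨e₁, v_{r(1)}⟩ ⋯ ⟨e_n, v_{r(n)}⟩|² ≤ ((‖v₁‖² + ⋯ + ‖v_k‖²)/n)^n. -/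
/-!
Write `M i j = ⟪eᵢ, vⱼ⟫`; the inner sums are the coefficients `c_a` of the polynomial
`P z = ∏ᵢ ∑ⱼ M i j zⱼ`. On the torus `|zⱼ| = 1`, Parseval in the basis `e` and the orthogonality
of the `vⱼ` give `∑ᵢ |∑ⱼ M i j zⱼ|² = ‖∑ⱼ zⱼ vⱼ‖² = ∑ⱼ ‖vⱼ‖²`, so by AM-GM
`|P z|² ≤ ((∑ⱼ ‖vⱼ‖²) / n) ^ n`. The monomials of degree at most `n` are orthogonal on the grid of
`(n + 1)`-th roots of unity, so averaging `|P|²` over that grid gives exactly `∑_a |c_a|²`.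
-/

open Finset ComplexConjugate

theorem Real.prod_le_sum_div_card_pow {ι : Type*} (s : Finset ι) {f : ι → ℝ}
    (hf : ∀ i ∈ s, 0 ≤ f i) : ∏ i ∈ s, f i ≤ ((∑ i ∈ s, f i) / #s) ^ #s := by
  rcases s.eq_empty_or_nonempty with rfl | hs
  · simp
  have hcard : (0 : ℝ) < #s := by exact_mod_cast hs.card_pos
  have amgm := Real.geom_mean_le_arith_mean s (fun _ => 1) f (fun _ _ => zero_le_one)
    (by simpa using hcard) hf
  simp only [Real.rpow_one, one_mul, sum_const, nsmul_eq_mul, mul_one] at amgm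
  calc ∏ i ∈ s, f i = ((∏ i ∈ s, f i) ^ (#s : ℝ)⁻¹) ^ #s := by
        rw [← Real.rpow_natCast, ← Real.rpow_mul (prod_nonneg hf), inv_mul_cancel₀ hcard.ne',
          Real.rpow_one]
    _ ≤ _ := by gcongr; exact Real.rpow_nonneg (prod_nonneg hf) _

theorem norm_sum_sq_eq_sum_norm_sq_of_pairwise {𝕜 E ι : Type*} [RCLike 𝕜]
    [NormedAddCommGroup E] [InnerProductSpace 𝕜 E] (s : Finset ι) {v : ι → E}
    (hv : (s : Set ι).Pairwise fun i j => inner 𝕜 (v i) (v j) = 0) :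
    ‖∑ i ∈ s, v i‖ ^ 2 = ∑ i ∈ s, ‖v i‖ ^ 2 := by
  have diag :
      inner 𝕜 (∑ i ∈ s, v i) (∑ i ∈ s, v i) = ∑ i ∈ s, inner 𝕜 (v i) (v i) := by
    rw [sum_inner]
    refine sum_congr rfl fun i hi => ?_
    rw [inner_sum, sum_eq_single_of_mem i hi fun j hj hji => hv hi hj hji.symm]
  rw [InnerProductSpace.norm_sq_eq_re_inner (𝕜 := 𝕜), diag, map_sum]
  exact sum_congr rfl fun i _ => (InnerProductSpace.norm_sq_eq_re_inner (𝕜 := 𝕜) _).symm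

theorem IsPrimitiveRoot.sum_pow_mul_conj_pow {ζ : ℂ} {N : ℕ} (hζ : IsPrimitiveRoot ζ N)
    {a b : ℕ} (ha : a < N) (hb : b < N) :
    ∑ c : Fin N, (ζ ^ (c : ℕ)) ^ a * conj ((ζ ^ (c : ℕ)) ^ b) =
      if a = b then (N : ℂ) else 0 := by
  have hN : N ≠ 0 := by omega
  have hconj : conj ζ = ζ⁻¹ := (Complex.inv_eq_conj (hζ.norm'_eq_one hN)).symm
  have hζ0 : ζ ≠ 0 := hζ.ne_zero hN
  set ω := ζ ^ a * ζ⁻¹ ^ b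
  have hterm : ∀ c : ℕ, (ζ ^ c) ^ a * conj ((ζ ^ c) ^ b) = ω ^ c := by
    intro c; simp only [map_pow, hconj, ω]; ring
  rw [Fin.sum_univ_eq_sum_range (fun c => (ζ ^ c) ^ a * conj ((ζ ^ c) ^ b)),
    sum_congr rfl fun c _ => hterm c]
  split_ifs with hab
  · subst hab
    simp [ω, ← mul_pow, mul_inv_cancel₀ hζ0]
  · have hω1 : ω ≠ 1 := by
      intro h
      refine hab (hζ.pow_inj ha hb ?_)
      rwa [← mul_inv_eq_one₀ (pow_ne_zero _ hζ0), ← inv_pow]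
    have hωN : ω ^ N = 1 := by
      rw [mul_pow, ← pow_mul, ← pow_mul, mul_comm a, mul_comm b, pow_mul, pow_mul, inv_pow,
        hζ.pow_eq_one, inv_one, one_pow, one_pow, one_mul]
    rw [geom_sum_eq hω1, hωN, sub_self, zero_div]

variable {n k : ℕ}

/-- The paper's relation `r ∼ a` is `fiberCard r = a`. -/
def fiberCard (r : Fin n → Fin k) (j : Fin k) : ℕ := #{x | r x = j}

theorem sum_fiberCard (r : Fin n → Fin k) : ∑ j, fiberCard r j = n := by
  simpa [fiberCard] using (card_eq_sum_card_fiberwise (s := univ) (t := univ) (f := r)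
    fun _ _ => mem_univ _).symm

theorem prod_comp_eq_prod_pow_fiberCard {M : Type*} [CommMonoid M] (r : Fin n → Fin k)
    (z : Fin k → M) : ∏ i, z (r i) = ∏ j, z j ^ fiberCard r j := by
  rw [← prod_fiberwise' univ r z]
  simp [fiberCard]

theorem Finset.Nat.le_of_mem_antidiagonalTuple {a : Fin k → ℕ}
    (ha : a ∈ Nat.antidiagonalTuple k n) (j : Fin k) : a j ≤ n :=
  Nat.mem_antidiagonalTuple.1 ha ▸ single_le_sum (fun _ _ => Nat.zero_le _) (mem_univ j)

theorem prod_sum_mul_eq_sum_antidiagonalTuple {R : Type*} [CommSemiring R]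
    (M : Fin n → Fin k → R) (z : Fin k → R) :
    ∏ i, ∑ j, M i j * z j = ∑ a ∈ Nat.antidiagonalTuple k n,
      (∑ r ∈ univ.filter (fun r : Fin n → Fin k => ∀ j, fiberCard r j = a j),
        ∏ i, M i (r i)) * ∏ j, z j ^ a j := by
  rw [Fintype.prod_sum, ← sum_fiberwise_of_maps_to (g := fiberCard)
    (t := Nat.antidiagonalTuple k n) fun r _ => Nat.mem_antidiagonalTuple.2 (sum_fiberCard r)]
  refine sum_congr rfl fun a _ => ?_
  rw [sum_mul]
  refine sum_congr (filter_congr fun r _ => funext_iff) fun r hr => ?_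
  rw [prod_mul_distrib, prod_comp_eq_prod_pow_fiberCard, funext (mem_filter.1 hr).2]

theorem OrthonormalBasis.norm_prod_inner_sq_le {ι 𝕜 E : Type*} [Fintype ι] [RCLike 𝕜]
    [NormedAddCommGroup E] [InnerProductSpace 𝕜 E] (b : OrthonormalBasis ι 𝕜 E) (x : E) :
    ‖∏ i, inner 𝕜 (b i) x‖ ^ 2 ≤ (‖x‖ ^ 2 / Fintype.card ι) ^ Fintype.card ι := by
  rw [norm_prod, ← prod_pow, ← b.sum_sq_norm_inner_right x, ← card_univ]
  exact Real.prod_le_sum_div_card_pow univ fun i _ => by positivity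

noncomputable def gridMonomial (ζ : ℂ) (N : ℕ) (a : Fin k → ℕ) :
    EuclideanSpace ℂ (Fin k → Fin N) :=
  WithLp.toLp 2 fun t => ∏ j, (ζ ^ (t j : ℕ)) ^ a j

theorem inner_gridMonomial {ζ : ℂ} {N : ℕ} (hζ : IsPrimitiveRoot ζ N) {a b : Fin k → ℕ}
    (ha : ∀ j, a j < N) (hb : ∀ j, b j < N) :
    inner ℂ (gridMonomial ζ N a) (gridMonomial ζ N b) = if a = b then (N : ℂ) ^ k else 0 := by
  simp only [gridMonomial, PiLp.inner_apply, RCLike.inner_apply, map_prod, ← prod_mul_distrib]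
  rw [← Fintype.prod_sum fun j (c : Fin N) => (ζ ^ (c : ℕ)) ^ b j * conj ((ζ ^ (c : ℕ)) ^ a j)]
  simp only [hζ.sum_pow_mul_conj_pow (hb _) (ha _), Fintype.prod_ite_zero, funext_iff,
    prod_const, card_univ, Fintype.card_fin, eq_comm]

theorem norm_gridMonomial_sq {ζ : ℂ} {N : ℕ} (hζ : IsPrimitiveRoot ζ N) (hN : N ≠ 0)
    (a : Fin k → ℕ) : ‖gridMonomial ζ N a‖ ^ 2 = (N : ℝ) ^ k := by
  simp [gridMonomial, EuclideanSpace.norm_sq_eq, hζ.norm'_eq_one hN]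

theorem sum_norm_sq_sum_mul_gridMonomial {ζ : ℂ} {N : ℕ} (hζ : IsPrimitiveRoot ζ N)
    (hN : N ≠ 0) (A : Finset (Fin k → ℕ)) (hA : ∀ a ∈ A, ∀ j, a j < N) (c : (Fin k → ℕ) → ℂ) :
    ∑ t : Fin k → Fin N, ‖∑ a ∈ A, c a * ∏ j, (ζ ^ (t j : ℕ)) ^ a j‖ ^ 2
      = N ^ k * ∑ a ∈ A, ‖c a‖ ^ 2 := by
  have hnorm : ∑ t : Fin k → Fin N, ‖∑ a ∈ A, c a * ∏ j, (ζ ^ (t j : ℕ)) ^ a j‖ ^ 2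
      = ‖∑ a ∈ A, c a • gridMonomial ζ N a‖ ^ 2 := by
    simp [EuclideanSpace.norm_sq_eq, gridMonomial]
  have horth : (A : Set (Fin k → ℕ)).Pairwise fun a b =>
      inner ℂ (c a • gridMonomial ζ N a) (c b • gridMonomial ζ N b) = 0 := by
    intro a ha b hb hab
    rw [inner_smul_left, inner_smul_right, inner_gridMonomial hζ (hA a ha) (hA b hb), if_neg hab,
      mul_zero, mul_zero]
  rw [hnorm, norm_sum_sq_eq_sum_norm_sq_of_pairwise A horth, mul_sum]
  simp only [norm_smul, mul_pow, norm_gridMonomial_sq hζ hN, mul_comm]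

theorem sum_norm_sq_le_of_forall_norm_sq_le {ζ : ℂ} {N : ℕ} (hζ : IsPrimitiveRoot ζ N)
    (hN : N ≠ 0) (A : Finset (Fin k → ℕ)) (hA : ∀ a ∈ A, ∀ j, a j < N) (c : (Fin k → ℕ) → ℂ)
    {B : ℝ}
    (hB : ∀ t : Fin k → Fin N, ‖∑ a ∈ A, c a * ∏ j, (ζ ^ (t j : ℕ)) ^ a j‖ ^ 2 ≤ B) :
    ∑ a ∈ A, ‖c a‖ ^ 2 ≤ B := by
  refine le_of_mul_le_mul_left ?_ (by positivity : (0 : ℝ) < N ^ k)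
  calc (N : ℝ) ^ k * ∑ a ∈ A, ‖c a‖ ^ 2
      = ∑ t : Fin k → Fin N, ‖∑ a ∈ A, c a * ∏ j, (ζ ^ (t j : ℕ)) ^ a j‖ ^ 2 :=
        (sum_norm_sq_sum_mul_gridMonomial hζ hN A hA c).symm
    _ ≤ ∑ _t : Fin k → Fin N, B := sum_le_sum fun t _ => hB t
    _ = N ^ k * B := by simp

open Finset in
open Classical in
/-- For an orthonormal basis `e₁,…,eₙ` and pairwise orthogonal vectors
`v₁,…,v_k`, summing over all compositions `a` of `n`:
`∑_a |∑_{r ∼ a} ⟨e₁, v_{r 1}⟩ ⋯ ⟨eₙ, v_{r n}⟩|² ≤ ((‖v₁‖² + ⋯ + ‖v_k‖²)/n)ⁿ`. -/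
theorem stmt_11 {V : Type*} [NormedAddCommGroup V] [InnerProductSpace ℂ V]
    {n k : ℕ} (b : Module.Basis (Fin n) ℂ V) (he : Orthonormal ℂ b)
    (v : Fin k → V) (hv : ∀ i j, i ≠ j → (inner ℂ (v i) (v j) : ℂ) = 0) :
    ∑ a ∈ Finset.Nat.antidiagonalTuple k n,
        ‖∑ r ∈ Finset.univ.filter
            (fun r : Fin n → Fin k =>
              ∀ i, (Finset.univ.filter fun x => r x = i).card = a i),
          ∏ i, (inner ℂ (b i) (v (r i)) : ℂ)‖ ^ 2
      ≤ ((∑ i, ‖v i‖ ^ 2) / n) ^ n := by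
  have hN : n + 1 ≠ 0 := n.succ_ne_zero
  have hζ := Complex.isPrimitiveRoot_exp (n + 1) hN
  set ζ := Complex.exp (2 * Real.pi * Complex.I / (n + 1 : ℕ))
  refine sum_norm_sq_le_of_forall_norm_sq_le hζ hN _
    (fun a ha j => Nat.lt_succ_of_le (Nat.le_of_mem_antidiagonalTuple ha j)) _ fun t => ?_
  set w := ∑ j, ζ ^ (t j : ℕ) • v j
  have hw : ‖w‖ ^ 2 = ∑ j, ‖v j‖ ^ 2 := by
    rw [norm_sum_sq_eq_sum_norm_sq_of_pairwise (𝕜 := ℂ) univ fun i _ j _ hij => by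
      simp only [inner_smul_left, inner_smul_right, hv i j hij, mul_zero]]
    simp [norm_smul, hζ.norm'_eq_one hN]
  have hexpand : ∏ i, inner ℂ (b i) w = ∑ a ∈ Nat.antidiagonalTuple k n,
      (∑ r ∈ univ.filter (fun r : Fin n → Fin k => ∀ j, fiberCard r j = a j),
        ∏ i, inner ℂ (b i) (v (r i))) * ∏ j, (ζ ^ (t j : ℕ)) ^ a j := by
    simp only [w, inner_sum, inner_smul_right, mul_comm (ζ ^ _)]
    exact prod_sum_mul_eq_sum_antidiagonalTuple _ _
  have bound := (b.toOrthonormalBasis he).norm_prod_inner_sq_le w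
  rw [Module.Basis.coe_toOrthonormalBasis, Fintype.card_fin, hw, hexpand] at bound
  exact bound
end

section
/- Let W be an n × n complex matrix whose columns consist of a₁ copies of a vector v₁, a₂ copies of v₂, …, a_k copies of v_k, where v₁,…,v_k are pairwise orthogonal in ℂⁿ with the standard inner product and a₁+⋯+a_k = n. Then |per W| ≤ (a₁!⋯a_k! / (a₁^{a₁/2}⋯a_k^{a_k/2})) · ‖v₁‖^{a₁}⋯‖v_k‖^{a_k}, where per W denotes the permanent of W. -/
/-!
Grouping the permutations `σ` by the colouring `c ∘ σ` writes `per W` as `∏ aₗ!` times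
`S(v) = ∑_f ∏ᵢ v_{f i} i`, summed over the colourings `f` with colour counts `a`. This `S(v)` is
the coefficient of `∏ yₗ ^ aₗ` in `∏ᵢ ∑ₗ yₗ vₗ i`, and averaging over `yₗ = ω ^ tₗ` for a primitive
`N`-th root of unity `ω` with `N > n` extracts it exactly. For every `t` the vector
`x = ∑ₗ ω ^ tₗ • vₗ` has, by orthogonality, `‖x‖² = ∑ₗ ‖vₗ‖²`; once each `vₗ` is rescaled to norm
`√aₗ` this is `n`, and AM–GM gives `∏ᵢ |xᵢ| ≤ 1`. Hence `|S(v)| ≤ 1` for the rescaled vectors, and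
undoing the scaling gives the bound.
-/

open Finset

lemma norm_sum_sq_eq_sum_norm_sq_of_pairwise_s13 {𝕜 E κ : Type*} [RCLike 𝕜] [NormedAddCommGroup E]
    [InnerProductSpace 𝕜 E] [Fintype κ] {u : κ → E}
    (hu : Pairwise fun l l' => (inner 𝕜 (u l) (u l') : 𝕜) = 0) :
    ‖∑ l, u l‖ ^ 2 = ∑ l, ‖u l‖ ^ 2 := by
  have h : ((‖∑ l, u l‖ : ℝ) : 𝕜) ^ 2 = ∑ l, ((‖u l‖ : ℝ) : 𝕜) ^ 2 := by
    simp only [← inner_self_eq_norm_sq_to_K, sum_inner, inner_sum]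
    exact sum_congr rfl fun l _ =>
      sum_eq_single l (fun l' _ hl' => hu hl') (fun h => absurd (mem_univ l) h)
  exact_mod_cast h

lemma Real.prod_le_one_of_sum_le_card {ι : Type*} [Fintype ι] {z : ι → ℝ} (hz : ∀ i, 0 ≤ z i)
    (hsum : ∑ i, z i ≤ Fintype.card ι) : ∏ i, z i ≤ 1 := by
  rcases isEmpty_or_nonempty ι with hι | hι
  · simp
  have hcard : (0 : ℝ) < Fintype.card ι := by exact_mod_cast Fintype.card_pos
  have hamgm := Real.geom_mean_le_arith_mean univ (fun _ => 1) z (fun _ _ => zero_le_one)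
    (by simpa using hcard) (fun i _ => hz i)
  simp only [Real.rpow_one, one_mul, sum_const, card_univ, nsmul_eq_mul, mul_one] at hamgm
  have hmean : (∏ i, z i) ^ (Fintype.card ι : ℝ)⁻¹ ≤ 1 :=
    hamgm.trans ((div_le_one hcard).mpr hsum)
  simpa using (Real.rpow_inv_le_iff_of_pos (prod_nonneg fun i _ => hz i) zero_le_one hcard).mp hmean

lemma EuclideanSpace.prod_norm_le_one_of_norm_sq_le_card {𝕜 ι : Type*} [RCLike 𝕜] [Fintype ι]
    {x : EuclideanSpace 𝕜 ι} (hx : ‖x‖ ^ 2 ≤ Fintype.card ι) : ∏ i, ‖x i‖ ≤ 1 := by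
  have hsq : (∏ i, ‖x i‖) ^ 2 ≤ 1 := by
    rw [← prod_pow]
    exact Real.prod_le_one_of_sum_le_card (fun i => sq_nonneg _)
      (EuclideanSpace.norm_sq_eq x ▸ hx)
  exact (pow_le_one_iff_of_nonneg (prod_nonneg fun i _ => norm_nonneg _) two_ne_zero).mp hsq

lemma Real.sqrt_pow {x : ℝ} (hx : 0 ≤ x) (m : ℕ) : √(x ^ m) = √x ^ m := by
  rw [← Real.sqrt_sq (pow_nonneg (Real.sqrt_nonneg x) m), ← pow_mul, mul_comm, pow_mul,
    Real.sq_sqrt hx]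

section Colorings

variable {ι κ : Type*} [Fintype ι] [DecidableEq κ]

lemma card_filter_comp_perm (c : ι → κ) (σ : Equiv.Perm ι) (l : κ) :
    #{i | c (σ i) = l} = #{j | c j = l} :=
  card_equiv σ (by simp)

lemma prod_comp_eq_prod_pow_card_fiber [Fintype κ] {M : Type*} [CommMonoid M] (y : κ → M)
    (f : ι → κ) : ∏ i, y (f i) = ∏ l, y l ^ #{i | f i = l} := by
  simp only [← prod_fiberwise' univ f y, prod_const]

variable [DecidableEq ι] [Fintype κ]

lemma prod_sum_mul_eq_sum_prod_pow_mul {R : Type*} [CommSemiring R] (y : κ → R)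
    (v : κ → ι → R) :
    ∏ i, ∑ l, y l * v l i = ∑ f : ι → κ, (∏ l, y l ^ #{i | f i = l}) * ∏ i, v (f i) i := by
  simp only [Fintype.prod_sum, prod_mul_distrib, prod_comp_eq_prod_pow_card_fiber]

def coloringsWithCounts (a : κ → ℕ) : Finset (ι → κ) :=
  {f | ∀ l, #{i | f i = l} = a l}

def coloringSum {R : Type*} [CommSemiring R] (v : κ → ι → R) (a : κ → ℕ) : R :=
  ∑ f ∈ coloringsWithCounts a, ∏ i, v (f i) i

lemma exists_perm_comp_eq_of_mem_coloringsWithCounts {c f : ι → κ}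
    (hf : f ∈ coloringsWithCounts fun l => #{j | c j = l}) : ∃ σ : Equiv.Perm ι, c ∘ σ = f := by
  have hcard (l : κ) : Fintype.card {i // f i = l} = Fintype.card {j // c j = l} := by
    simp only [Fintype.card_subtype]
    exact (mem_filter.mp hf).2 l
  exact ⟨Equiv.ofFiberEquiv fun l => Fintype.equivOfCardEq (hcard l),
    funext <| Equiv.ofFiberEquiv_map _⟩

lemma card_perm_comp_eq_prod_factorial (c : ι → κ) (σ₀ : Equiv.Perm ι) :
    #{σ : Equiv.Perm ι | c ∘ σ = c ∘ σ₀} = ∏ l, (#{j | c j = l}).factorial := by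
  have hshift (σ : Equiv.Perm ι) : c ∘ σ = c ∘ σ₀ ↔ c ∘ ⇑(σ * σ₀⁻¹) = c := by
    rw [Equiv.Perm.coe_mul, ← Function.comp_assoc, Equiv.Perm.coe_inv, Equiv.comp_symm_eq]
  rw [← Fintype.card_subtype, Fintype.card_congr
    ((Equiv.mulRight σ₀⁻¹).subtypeEquiv (q := fun τ : Equiv.Perm ι => c ∘ τ = c) hshift),
    DomMulAct.stabilizer_card]
  simp only [Fintype.card_subtype]

theorem permanent_of_columns_comp {R : Type*} [CommSemiring R] (v : κ → ι → R) {c : ι → κ}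
    {a : κ → ℕ} (hc : ∀ l, #{j | c j = l} = a l) :
    (Matrix.of fun i j => v (c j) i).permanent = (∏ l, ((a l).factorial : R)) * coloringSum v a := by
  obtain rfl : (fun l => #{j | c j = l}) = a := funext hc
  have hmaps (σ : Equiv.Perm ι) : c ∘ σ ∈ coloringsWithCounts fun l => #{j | c j = l} :=
    mem_filter.mpr ⟨mem_univ _, card_filter_comp_perm c σ⟩
  rw [← Matrix.permanent_transpose, Matrix.permanent, coloringSum, mul_sum,
    ← sum_fiberwise_of_maps_to (fun σ _ => hmaps σ)]
  refine sum_congr rfl fun f hf => ?_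
  obtain ⟨σ₀, rfl⟩ := exists_perm_comp_eq_of_mem_coloringsWithCounts hf
  rw [sum_congr rfl fun σ hσ => ?_, sum_const, card_perm_comp_eq_prod_factorial, nsmul_eq_mul,
    Nat.cast_prod]
  exact congrArg (fun g => ∏ i, v (g i) i) (mem_filter.mp hσ).2

lemma coloringSum_mul_left {R : Type*} [CommSemiring R] (s : κ → R) (v : κ → ι → R)
    (a : κ → ℕ) : coloringSum (fun l i => s l * v l i) a = (∏ l, s l ^ a l) * coloringSum v a := by
  rw [coloringSum, coloringSum, mul_sum]
  refine sum_congr rfl fun f hf => ?_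
  rw [prod_mul_distrib, prod_comp_eq_prod_pow_card_fiber]
  simp only [(mem_filter.mp hf).2]

lemma coloringSum_eq_zero {R : Type*} [CommSemiring R] {v : κ → ι → R} {a : κ → ℕ} {l : κ}
    (hl : a l ≠ 0) (hv : v l = 0) : coloringSum v a = 0 := by
  refine sum_eq_zero fun f hf => ?_
  obtain ⟨i, hi⟩ : ({i | f i = l} : Finset ι).Nonempty := by
    rw [← card_pos, (mem_filter.mp hf).2 l]
    exact Nat.pos_of_ne_zero hl
  exact prod_eq_zero (mem_univ i) (by rw [(mem_filter.mp hi).2, hv, Pi.zero_apply])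

namespace IsPrimitiveRoot

variable {K : Type*} [Field K] {ω : K} {N : ℕ}

lemma sum_pow_mul_inv_pow (hω : IsPrimitiveRoot ω N) {m a : ℕ} (hm : m < N) (ha : a < N) :
    ∑ j ∈ range N, (ω ^ j) ^ m * ((ω ^ j) ^ a)⁻¹ = if m = a then (N : K) else 0 := by
  have hω0 : ω ≠ 0 := hω.ne_zero (by omega)
  have hgeom (j : ℕ) : (ω ^ j) ^ m * ((ω ^ j) ^ a)⁻¹ = (ω ^ m / ω ^ a) ^ j := by
    rw [div_pow, ← pow_mul, ← pow_mul, mul_comm j, mul_comm j, pow_mul, pow_mul, div_eq_mul_inv]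
  simp only [hgeom]
  split_ifs with hma
  · simp [hma, div_self (pow_ne_zero a hω0)]
  · have hne : ω ^ m / ω ^ a ≠ 1 :=
      fun h => hma (hω.pow_inj hm ha (div_eq_one_iff_eq (pow_ne_zero a hω0) |>.mp h))
    rw [geom_sum_eq hne, div_pow, ← pow_mul, ← pow_mul, mul_comm m, mul_comm a, pow_mul, pow_mul,
      hω.pow_eq_one, one_pow, one_pow, div_one, sub_self, zero_div]

lemma sum_piFinset_prod_pow_mul_inv_pow (hω : IsPrimitiveRoot ω N) {m a : κ → ℕ}
    (hm : ∀ l, m l < N) (ha : ∀ l, a l < N) :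
    ∑ t ∈ Fintype.piFinset fun _ : κ => range N, ∏ l, (ω ^ t l) ^ m l * ((ω ^ t l) ^ a l)⁻¹
      = if ∀ l, m l = a l then (N : K) ^ Fintype.card κ else 0 := by
  rw [← prod_univ_sum (fun _ => range N) fun l j => (ω ^ j) ^ m l * ((ω ^ j) ^ a l)⁻¹,
    Fintype.prod_congr _ _ fun l => hω.sum_pow_mul_inv_pow (hm l) (ha l),
    Fintype.prod_ite_zero, prod_const, card_univ]

theorem sum_piFinset_mul_prod_sum_eq_coloringSum (hω : IsPrimitiveRoot ω N)
    (hN : Fintype.card ι < N) (v : κ → ι → K) {a : κ → ℕ} (ha : ∀ l, a l < N) :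
    ∑ t ∈ Fintype.piFinset fun _ : κ => range N,
        (∏ l, ((ω ^ t l) ^ a l)⁻¹) * ∏ i, ∑ l, ω ^ t l * v l i
      = (N : K) ^ Fintype.card κ * coloringSum v a := by
  have hm (f : ι → κ) (l : κ) : #{i | f i = l} < N := (card_filter_le _ _).trans_lt hN
  calc _ = ∑ f : ι → κ, (∑ t ∈ Fintype.piFinset fun _ : κ => range N,
          ∏ l, (ω ^ t l) ^ #{i | f i = l} * ((ω ^ t l) ^ a l)⁻¹) * ∏ i, v (f i) i := by
        simp only [prod_sum_mul_eq_sum_prod_pow_mul, mul_sum, sum_mul, prod_mul_distrib]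
        rw [sum_comm]
        exact sum_congr rfl fun f _ => sum_congr rfl fun t _ => by ring
    _ = ∑ f : ι → κ, (if ∀ l, #{i | f i = l} = a l then (N : K) ^ Fintype.card κ else 0) *
          ∏ i, v (f i) i := by
        simp only [hω.sum_piFinset_prod_pow_mul_inv_pow (hm _) ha]
    _ = _ := by
        simp only [ite_mul, zero_mul, ← sum_filter, coloringSum, coloringsWithCounts, mul_sum]

end IsPrimitiveRoot

theorem norm_coloringSum_le_one {u : κ → EuclideanSpace ℂ ι}
    (hu : Pairwise fun l l' => (inner ℂ (u l) (u l') : ℂ) = 0) {a : κ → ℕ}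
    (ha : ∑ l, a l = Fintype.card ι) (hua : ∀ l, ‖u l‖ ^ 2 ≤ a l) :
    ‖coloringSum (fun l => u l) a‖ ≤ 1 := by
  set N := Fintype.card ι + 1
  have hω := Complex.isPrimitiveRoot_exp N (Nat.succ_ne_zero _)
  set ω := Complex.exp (2 * Real.pi * Complex.I / N)
  have hωn : ‖ω‖ = 1 := hω.norm'_eq_one (Nat.succ_ne_zero _)
  have haN (l : κ) : a l < N :=
    Nat.lt_succ_of_le (ha ▸ single_le_sum (fun l _ => Nat.zero_le (a l)) (mem_univ l))
  have hterm (t : κ → ℕ) :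
      ‖(∏ l, ((ω ^ t l) ^ a l)⁻¹) * ∏ i, ∑ l, ω ^ t l * u l i‖ ≤ 1 := by
    set x : EuclideanSpace ℂ ι := ∑ l, ω ^ t l • u l
    have hx : ‖x‖ ^ 2 ≤ Fintype.card ι := by
      rw [norm_sum_sq_eq_sum_norm_sq_of_pairwise_s13 (𝕜 := ℂ), ← ha]
      · push_cast
        exact sum_le_sum fun l _ => by simpa [norm_smul, hωn] using hua l
      · intro l l' hll'
        simp [inner_smul_left, inner_smul_right, hu hll']
    have hxi (i : ι) : x i = ∑ l, ω ^ t l * u l i := by simp [x]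
    simpa [norm_prod, hωn, ← hxi] using EuclideanSpace.prod_norm_le_one_of_norm_sq_le_card hx
  have hbound :
      ‖(N : ℂ) ^ Fintype.card κ * coloringSum (fun l => u l) a‖ ≤ N ^ Fintype.card κ := by
    rw [← hω.sum_piFinset_mul_prod_sum_eq_coloringSum (Nat.lt_succ_self _) _ haN]
    refine (norm_sum_le _ _).trans ((sum_le_sum fun t _ => hterm t).trans ?_)
    simp
  rw [norm_mul, norm_pow, Complex.norm_natCast] at hbound
  exact (mul_le_iff_le_one_right (pow_pos (Nat.cast_pos.mpr (Fintype.card ι).succ_pos) _)).mp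
    hbound

theorem norm_coloringSum_le {v : κ → EuclideanSpace ℂ ι}
    (hv : Pairwise fun l l' => (inner ℂ (v l) (v l') : ℂ) = 0) {a : κ → ℕ}
    (ha : ∑ l, a l = Fintype.card ι) :
    ‖coloringSum (fun l => v l) a‖ ≤ ∏ l, ‖v l‖ ^ a l / √((a l : ℝ) ^ a l) := by
  by_cases hzero : ∃ l, a l ≠ 0 ∧ v l = 0
  · obtain ⟨l, hl, hvl⟩ := hzero
    rw [coloringSum_eq_zero hl (by simp [hvl]), norm_zero]
    positivity
  push Not at hzero
  set s : κ → ℝ := fun l => √(a l) / ‖v l‖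
  have hs_pow_pos (l : κ) : 0 < s l ^ a l := by
    rcases eq_or_ne (a l) 0 with hl | hl
    · simp [hl]
    · have : 0 < ‖v l‖ := norm_pos_iff.mpr (hzero l hl)
      have : 0 < √(a l : ℝ) := Real.sqrt_pos.mpr (by exact_mod_cast Nat.pos_of_ne_zero hl)
      positivity
  have horth : Pairwise fun l l' => (inner ℂ ((s l : ℂ) • v l) ((s l' : ℂ) • v l') : ℂ) = 0 :=
    fun l l' hll' => by simp [hv hll']
  have hnorm (l : κ) : ‖(s l : ℂ) • v l‖ ^ 2 ≤ a l := by
    rcases eq_or_ne (v l) 0 with hvl | hvl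
    · simp [hvl]
    · have : ‖v l‖ ≠ 0 := norm_ne_zero_iff.mpr hvl
      simp [s, norm_smul, this]
  have hscaled := norm_coloringSum_le_one horth ha hnorm
  rw [show coloringSum (fun l => ⇑((s l : ℂ) • v l)) a
      = coloringSum (fun l i => (s l : ℂ) * v l i) a from rfl, coloringSum_mul_left, norm_mul,
    norm_prod] at hscaled
  have hs_norm : ∏ l, ‖(s l : ℂ) ^ a l‖ = ∏ l, s l ^ a l := prod_congr rfl fun l _ => by
    rw [norm_pow, Complex.norm_real, Real.norm_of_nonneg (by positivity)]
  rw [hs_norm] at hscaled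
  calc ‖coloringSum (fun l => v l) a‖ ≤ (∏ l, s l ^ a l)⁻¹ := by
        rw [inv_eq_one_div, le_div_iff₀ (prod_pos fun l _ => hs_pow_pos l), mul_comm]
        exact hscaled
    _ = _ := by
        rw [← prod_inv_distrib]
        refine prod_congr rfl fun l _ => ?_
        rw [Real.sqrt_pow (Nat.cast_nonneg _), div_pow, inv_div]

end Colorings

open Finset in
/-- Permanent bound for matrices with orthogonal repeated columns: if the
columns of the `n × n` matrix `W` consist of `aᵢ` copies of `vᵢ` for pairwise
orthogonal vectors `v₁,…,v_k ∈ ℂⁿ` with `a₁+⋯+a_k = n`, then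
`|per W| ≤ (∏ᵢ aᵢ!/aᵢ^{aᵢ/2}) ∏ᵢ ‖vᵢ‖^{aᵢ}`. -/
theorem stmt_13 {n k : ℕ} (v : Fin k → EuclideanSpace ℂ (Fin n))
    (hv : ∀ i j, i ≠ j → (inner ℂ (v i) (v j) : ℂ) = 0)
    (a : Fin k → ℕ) (ha : ∑ i, a i = n)
    (c : Fin n → Fin k)
    (hc : ∀ i, (Finset.univ.filter fun x => c x = i).card = a i)
    (W : Matrix (Fin n) (Fin n) ℂ) (hW : ∀ x j, W x j = v (c j) x) :
    ‖W.permanent‖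
      ≤ (∏ i, ((a i).factorial : ℝ) / Real.sqrt ((a i : ℝ) ^ (a i))) *
          ∏ i, ‖v i‖ ^ (a i) := by
  rw [show W = Matrix.of fun x j => v (c j) x from Matrix.ext hW,
    permanent_of_columns_comp (fun l => ⇑(v l)) hc, norm_mul, norm_prod]
  calc _ ≤ (∏ l, ((a l).factorial : ℝ)) * ∏ l, ‖v l‖ ^ a l / √((a l : ℝ) ^ a l) := by
        simp only [Complex.norm_natCast]
        gcongr
        exact norm_coloringSum_le hv (by simpa using ha)
    _ = _ := by
        rw [← prod_mul_distrib, ← prod_mul_distrib]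
        exact prod_congr rfl fun l _ => by ring
end

section
/- Let ρ: G → U(V) be an irreducible unitary representation of a finite group G with d = dim V, and let v, w ∈ V ⊗ V* ⊗ V be unit vectors such that v ∈ (V ⊗ V*)^G ⊗ V and w ∈ V ⊗ (V* ⊗ V)^G, where (·)^G denotes the G-invariant subspace. Then |⟨v, w⟩| ≤ 1/d. -/
lemma schur_scalar {G : Type*} [Group G] [Fintype G] {d : ℕ} (hd : 0 < d)
    (ρ : G →* Matrix.unitaryGroup (Fin d) ℂ)
    (hirr : ∀ W : Submodule ℂ (Fin d → ℂ),
      (∀ (g : G) (x : Fin d → ℂ), x ∈ W →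
        (ρ g : Matrix (Fin d) (Fin d) ℂ).mulVec x ∈ W) → W = ⊥ ∨ W = ⊤)
    (M : Matrix (Fin d) (Fin d) ℂ)
    (hM : ∀ g : G, (ρ g : Matrix (Fin d) (Fin d) ℂ) * M = M * (ρ g : Matrix (Fin d) (Fin d) ℂ)) :
    ∃ c : ℂ, M = c • 1 := by
  haveI : NeZero d := ⟨hd.ne'⟩
  haveI : Nonempty (Fin d) := ⟨⟨0, hd⟩⟩
  obtain ⟨c, hc⟩ := Module.End.exists_eigenvalue (Matrix.mulVecLin M)
  refine ⟨c, ?_⟩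
  have hinv : ∀ (g : G) (x : Fin d → ℂ),
      x ∈ Module.End.eigenspace (Matrix.mulVecLin M) c →
      (ρ g : Matrix (Fin d) (Fin d) ℂ).mulVec x
        ∈ Module.End.eigenspace (Matrix.mulVecLin M) c := by
    intro g x hx
    rw [Module.End.mem_eigenspace_iff] at hx ⊢
    simp only [Matrix.mulVecLin_apply] at hx ⊢
    rw [Matrix.mulVec_mulVec, ← hM g, ← Matrix.mulVec_mulVec, hx, Matrix.mulVec_smul]
  rcases hirr _ hinv with hW | hW
  · exact absurd hW hc
  · have hall : ∀ x : Fin d → ℂ, M.mulVec x = c • x := by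
      intro x
      have hx : x ∈ Module.End.eigenspace (Matrix.mulVecLin M) c := hW ▸ Submodule.mem_top
      simpa using (Module.End.mem_eigenspace_iff).mp hx
    ext i j
    have h1 := congrFun (hall (Pi.single j 1)) i
    simp [Matrix.mulVec_single, Matrix.one_apply, Pi.single_apply] at h1 ⊢
    rw [h1]

open Matrix in
/-- Coordinate form (in an orthonormal basis) of: for an irreducible unitary
representation `ρ : G → U(V)` with `d = dim V`, and unit vectors
`v ∈ (V ⊗ V*)^G ⊗ V`, `w ∈ V ⊗ (V* ⊗ V)^G` in `V ⊗ V* ⊗ V`, one has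
`|⟨v, w⟩| ≤ 1/d`.  Membership of `v` in `(V ⊗ V*)^G ⊗ V` is expressed by every
slice `(i,j) ↦ v i j k` commuting with all `ρ g` (identifying `V ⊗ V*` with
`End V`), and membership of `w` in `V ⊗ (V* ⊗ V)^G` by every transposed slice
`(k,j) ↦ w i j k` commuting with all `ρ g`. -/
theorem stmt_14 {G : Type*} [Group G] [Fintype G] (d : ℕ) (hd : 0 < d)
    (ρ : G →* Matrix.unitaryGroup (Fin d) ℂ)
    (hirr : ∀ W : Submodule ℂ (Fin d → ℂ),
      (∀ (g : G) (x : Fin d → ℂ), x ∈ W →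
        (ρ g : Matrix (Fin d) (Fin d) ℂ).mulVec x ∈ W) → W = ⊥ ∨ W = ⊤)
    (v w : Fin d → Fin d → Fin d → ℂ)
    (hv1 : ∑ i, ∑ j, ∑ k, ‖v i j k‖ ^ 2 = 1)
    (hw1 : ∑ i, ∑ j, ∑ k, ‖w i j k‖ ^ 2 = 1)
    (hv : ∀ (g : G) (k : Fin d),
      (ρ g : Matrix (Fin d) (Fin d) ℂ) * Matrix.of (fun i j => v i j k)
        = Matrix.of (fun i j => v i j k) * (ρ g : Matrix (Fin d) (Fin d) ℂ))
    (hw : ∀ (g : G) (i : Fin d),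
      (ρ g : Matrix (Fin d) (Fin d) ℂ) * (Matrix.of (fun j k => w i j k))ᵀ
        = (Matrix.of (fun j k => w i j k))ᵀ * (ρ g : Matrix (Fin d) (Fin d) ℂ)) :
    ‖∑ i, ∑ j, ∑ k, starRingEnd ℂ (v i j k) * w i j k‖ ≤ 1 / d := by
  have hdR : (0:ℝ) < d := Nat.cast_pos.mpr hd
  -- Schur: each slice of v and w is scalar
  have hvs : ∀ k, ∃ c : ℂ, Matrix.of (fun i j => v i j k) = c • (1 : Matrix (Fin d) (Fin d) ℂ) :=
    fun k => schur_scalar hd ρ hirr _ (fun g => hv g k)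
  have hws : ∀ i, ∃ b : ℂ, (Matrix.of (fun j k => w i j k))ᵀ = b • (1 : Matrix (Fin d) (Fin d) ℂ) :=
    fun i => schur_scalar hd ρ hirr _ (fun g => hw g i)
  choose c hc using hvs
  choose b hb using hws
  have hvE : ∀ i j k, v i j k = if i = j then c k else 0 := by
    intro i j k
    have := congrFun (congrFun (hc k) i) j
    simpa [Matrix.one_apply, mul_ite, mul_one, mul_zero] using this
  have hwE : ∀ i j k, w i j k = if j = k then b i else 0 := by
    intro i j k
    have := congrFun (congrFun (hb i) k) j
    simp only [Matrix.transpose_apply, Matrix.of_apply, Matrix.smul_apply, Matrix.one_apply,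
      smul_eq_mul, mul_ite, mul_one, mul_zero] at this
    rw [this]
    by_cases h : j = k
    · simp [h]
    · rw [if_neg (fun h2 => h h2.symm), if_neg h]
  -- norms of the scalar coefficient vectors
  have hcs : ∑ k, ‖c k‖ ^ 2 = 1 / d := by
    have h2 : ∑ i, ∑ j, ∑ k : Fin d, ‖v i j k‖ ^ 2 = d * ∑ k, ‖c k‖ ^ 2 := by
      simp only [hvE, apply_ite, norm_zero]
      rw [Finset.sum_comm]
      simp [Finset.sum_ite_eq, Finset.mul_sum, mul_comm]
    rw [h2] at hv1
    rw [eq_div_iff hdR.ne']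
    linear_combination hv1
  have hbs : ∑ i, ‖b i‖ ^ 2 = 1 / d := by
    have h2 : ∑ i, ∑ j, ∑ k : Fin d, ‖w i j k‖ ^ 2 = d * ∑ i, ‖b i‖ ^ 2 := by
      simp only [hwE, apply_ite, norm_zero]
      rw [Finset.sum_comm]
      simp [Finset.sum_ite_eq, Finset.mul_sum, mul_comm]
    rw [h2] at hw1
    rw [eq_div_iff hdR.ne']
    linear_combination hw1
  -- the inner product collapses to a single sum
  have hsum : ∑ i, ∑ j, ∑ k, starRingEnd ℂ (v i j k) * w i j k
      = ∑ i, starRingEnd ℂ (c i) * b i := by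
    simp only [hvE, hwE, apply_ite (starRingEnd ℂ), map_zero, ite_mul, zero_mul, mul_ite, mul_zero]
    refine Finset.sum_congr rfl fun i _ => ?_
    rw [Finset.sum_eq_single i]
    · simp
    · intro j _ hj; simp [Ne.symm hj]
    · simp
  rw [hsum]
  -- Cauchy–Schwarz
  have h1 : ‖∑ i, starRingEnd ℂ (c i) * b i‖ ≤ ∑ i, ‖c i‖ * ‖b i‖ := by
    refine (norm_sum_le _ _).trans (le_of_eq ?_)
    simp [norm_mul]
  refine h1.trans ?_
  have key := Finset.sum_mul_sq_le_sq_mul_sq Finset.univ (fun i : Fin d => ‖c i‖)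
    (fun i : Fin d => ‖b i‖)
  simp only [hcs, hbs] at key
  have hS0 : (0:ℝ) ≤ ∑ i, ‖c i‖ * ‖b i‖ :=
    Finset.sum_nonneg fun i _ => mul_nonneg (norm_nonneg _) (norm_nonneg _)
  have hdinv : (0:ℝ) ≤ 1 / d := by positivity
  nlinarith [key, hS0, hdinv]
end

section
/- For 0 ≤ x ≤ y real numbers and θ ∈ [0,1], we have ((1−θ)x² + θy²)^{1/2} ≤ (1 − θ^{1/2})·x + θ^{1/2}·y. -/
/-- For `0 ≤ x ≤ y` and `θ ∈ [0,1]`,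
`((1-θ)x² + θy²)^{1/2} ≤ (1-√θ)x + √θ·y`. -/
theorem stmt_16 (x y θ : ℝ) (hx : 0 ≤ x) (hxy : x ≤ y)
    (hθ0 : 0 ≤ θ) (hθ1 : θ ≤ 1) :
    Real.sqrt ((1 - θ) * x ^ 2 + θ * y ^ 2)
      ≤ (1 - Real.sqrt θ) * x + Real.sqrt θ * y := by
  have hs : Real.sqrt θ ^ 2 = θ := Real.sq_sqrt hθ0
  have hs0 : 0 ≤ Real.sqrt θ := Real.sqrt_nonneg θ
  have hs1 : Real.sqrt θ ≤ 1 := Real.sqrt_le_one.mpr hθ1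
  apply Real.sqrt_le_sqrt ?_ |>.trans (le_of_eq (Real.sqrt_sq ?_))
  · nlinarith [mul_nonneg (mul_nonneg hs0 (sub_nonneg.mpr hs1)) (mul_nonneg hx (sub_nonneg.mpr hxy))]
  · nlinarith
end
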